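/- In the linear order L_X, for every limit ordinal α < ω₁ and every order isomorphism f : L_X → L_Y, one has f((α,0)) = (α,0); moreover α ∈ X if and only if α ∈ Y. -/

import Mathlib

open Ordinal Cardinal

/-- The first uncountable ordinal `ω₁`. -/
noncomputable def omega1' : Ordinal := (Cardinal.aleph 1).ord

/-- The underlying set of the linear order `L_X`. -/
def LX (X : Set Ordinal) : Type 1 :=
  {p : {o : Ordinal // o < omega1'} × ℕ // p.1.1 ∉ X → p.2 = 0}

/-- The order on `L_X`. -/
def LXlt (X : Set Ordinal) : LX X → LX X → Prop := fun p q =>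
  p.1.1.1 < q.1.1.1 ∨
  (p.1.1 = q.1.1 ∧ p.1.2 = 0 ∧ 0 < q.1.2) ∨
  (p.1.1 = q.1.1 ∧ q.1.2 < p.1.2 ∧ 0 < q.1.2)

/-! Order `L_X` lexicographically by `α` and then by the position of `n` in its block. The points
`(α, 0)` with `α` a limit ordinal are then exactly the successor limits of `L_X`, and such a point
has an immediate successor iff `α ∉ X`; both properties are invariant under order isomorphisms.
Hence `f` maps limit points `(α, 0)` to limit points `(γ, 0)`, and transfinite induction shows
`α ≤ γ`: otherwise `f (γ, 0) < f (α, 0) = (γ, 0)` contradicts the induction hypothesis at `γ`.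
The same for `f⁻¹` gives `γ = α`, and comparing immediate successors gives `α ∈ X ↔ α ∈ Y`. -/

open Order OrderDual

lemma omega1'_isSuccLimit : IsSuccLimit omega1' :=
  Cardinal.isSuccLimit_ord (Cardinal.aleph0_le_aleph 1)

lemma OrderIso.isSuccLimit_apply_iff {α β : Type*} [PartialOrder α] [PartialOrder β]
    (e : α ≃o β) {a : α} : IsSuccLimit (e a) ↔ IsSuccLimit a :=
  e.toInitialSeg.isSuccLimit_apply_iff

lemma OrderIso.isPredPrelimit_apply_iff {α β : Type*} [PartialOrder α] [PartialOrder β]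
    (e : α ≃o β) {a : α} : IsPredPrelimit (e a) ↔ IsPredPrelimit a :=
  isSuccPrelimit_toDual_iff.symm.trans <|
    e.dual.toInitialSeg.isSuccPrelimit_apply_iff.trans isSuccPrelimit_toDual_iff

/-- Within the block of an ordinal `α`, `(α, 0)` comes first, followed by the `(α, n)`, `n > 0`, in
decreasing order of `n`. -/
def idxKey (n : ℕ) : WithBot ℕᵒᵈ := if n = 0 then ⊥ else ((toDual n : ℕᵒᵈ) : WithBot ℕᵒᵈ)

lemma idxKey_injective : Function.Injective idxKey := by
  intro m n h
  unfold idxKey at h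
  split_ifs at h <;> simp_all

lemma idxKey_lt_idxKey {m n : ℕ} : idxKey m < idxKey n ↔ m = 0 ∧ 0 < n ∨ n < m ∧ 0 < n := by
  unfold idxKey
  split_ifs <;> simp_all [Nat.pos_iff_ne_zero]

namespace LX

variable {X : Set Ordinal}

def ord (p : LX X) : Ordinal := p.1.1.1

def idx (p : LX X) : ℕ := p.1.2

lemma ord_lt_omega1' (p : LX X) : p.ord < omega1' := p.1.1.2

lemma idx_eq_zero_of_ord_notMem {p : LX X} (h : p.ord ∉ X) : p.idx = 0 := p.2 h

lemma ext {p q : LX X} (h₁ : p.ord = q.ord) (h₂ : p.idx = q.idx) : p = q :=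
  Subtype.ext (Prod.ext (Subtype.ext h₁) h₂)

def key (p : LX X) : Ordinal ×ₗ WithBot ℕᵒᵈ := toLex (p.ord, idxKey p.idx)

lemma key_injective : Function.Injective (key (X := X)) := by
  intro p q h
  simp only [key, toLex_inj, Prod.mk.injEq] at h
  exact ext h.1 (idxKey_injective h.2)

noncomputable instance : LinearOrder (LX X) := LinearOrder.lift' key key_injective

lemma lt_iff {p q : LX X} :
    p < q ↔ p.ord < q.ord ∨ p.ord = q.ord ∧ (p.idx = 0 ∧ 0 < q.idx ∨ q.idx < p.idx ∧ 0 < q.idx) :=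
  Prod.Lex.toLex_lt_toLex.trans (by rw [idxKey_lt_idxKey])

lemma lt_iff_LXlt {p q : LX X} : p < q ↔ LXlt X p q := by
  simp only [lt_iff, LXlt, Subtype.ext_iff, ord, idx]
  tauto

def ofOrd (X : Set Ordinal) (α : Ordinal) (hα : α < omega1') : LX X := ⟨(⟨α, hα⟩, 0), fun _ => rfl⟩

@[simp] lemma ord_ofOrd (α : Ordinal) (hα : α < omega1') : (ofOrd X α hα).ord = α := rfl
@[simp] lemma idx_ofOrd (α : Ordinal) (hα : α < omega1') : (ofOrd X α hα).idx = 0 := rfl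

lemma ofOrd_ord {p : LX X} (h : p.idx = 0) : ofOrd X p.ord p.ord_lt_omega1' = p := ext rfl h.symm

lemma lt_ofOrd_iff {p : LX X} {α : Ordinal} {hα : α < omega1'} : p < ofOrd X α hα ↔ p.ord < α := by
  simp [lt_iff]

lemma ofOrd_lt_iff {q : LX X} {α : Ordinal} {hα : α < omega1'} :
    ofOrd X α hα < q ↔ α < q.ord ∨ α = q.ord ∧ 0 < q.idx := by
  simp [lt_iff]

lemma ord_le_ord_of_lt {p q : LX X} (h : p < q) : p.ord ≤ q.ord := by
  rcases lt_iff.1 h with h | ⟨h, -⟩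
  exacts [h.le, h.le]

lemma lt_of_ord_lt_ord {p q : LX X} (h : p.ord < q.ord) : p < q := lt_iff.2 (Or.inl h)

lemma lt_iff_of_ord_eq {p q : LX X} (h : p.ord = q.ord) :
    p < q ↔ p.idx = 0 ∧ 0 < q.idx ∨ q.idx < p.idx ∧ 0 < q.idx := by
  simp [lt_iff, h]

lemma idx_eq_zero_of_isSuccPrelimit {q : LX X} (hq : IsSuccPrelimit q) : q.idx = 0 := by
  by_contra h
  let p : LX X := ⟨(q.1.1, q.idx + 1), fun hq' => (h (idx_eq_zero_of_ord_notMem hq')).elim⟩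
  have hpq : p.ord = q.ord := rfl
  have hp : p.idx = q.idx + 1 := rfl
  refine hq p ⟨(lt_iff_of_ord_eq hpq).2 (by omega), fun t hpt htq => ?_⟩
  have htq' : t.ord = q.ord := le_antisymm (ord_le_ord_of_lt htq) (hpq ▸ ord_le_ord_of_lt hpt)
  rw [lt_iff_of_ord_eq (hpq.trans htq'.symm)] at hpt
  rw [lt_iff_of_ord_eq htq'] at htq
  omega

lemma isMin_ofOrd_zero (h : (0 : Ordinal) < omega1') : IsMin (ofOrd X 0 h) :=
  isMin_iff_forall_not_lt.2 fun _ hp => not_lt_zero (lt_ofOrd_iff.1 hp)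

lemma not_isSuccPrelimit_ofOrd_succ (δ : Ordinal) (h : succ δ < omega1') :
    ¬IsSuccPrelimit (ofOrd X (succ δ) h) := by
  classical
  -- the largest point of the block of `δ`
  let p : LX X := ⟨(⟨δ, (lt_succ δ).trans h⟩, if δ ∈ X then 1 else 0), fun hδ => if_neg hδ⟩
  have hp : p.ord = δ := rfl
  refine fun hq => hq p ⟨lt_of_ord_lt_ord (lt_succ δ), fun t hpt htq => ?_⟩
  have ht : t.ord = δ := le_antisymm (lt_succ_iff.1 (lt_ofOrd_iff.1 htq)) (ord_le_ord_of_lt hpt)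
  rw [lt_iff_of_ord_eq (hp.trans ht.symm)] at hpt
  by_cases hδ : δ ∈ X
  · have : p.idx = 1 := if_pos hδ
    omega
  · have : p.idx = 0 := if_neg hδ
    have := idx_eq_zero_of_ord_notMem (ht ▸ hδ)
    omega

lemma isSuccLimit_ofOrd {α : Ordinal} (h : α < omega1') (hα : IsSuccLimit α) :
    IsSuccLimit (ofOrd X α h) := by
  refine ⟨not_isMin_of_lt (lt_ofOrd_iff.2 hα.pos : ofOrd X 0 (hα.pos.trans h) < _), fun p hp => ?_⟩
  have hsucc : succ p.ord < α := hα.succ_lt (lt_ofOrd_iff.1 hp.lt)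
  exact hp.2 (lt_of_ord_lt_ord (q := ofOrd X _ (hsucc.trans h)) (lt_succ p.ord))
    (lt_ofOrd_iff.2 hsucc)

lemma isSuccLimit_iff {q : LX X} : IsSuccLimit q ↔ q.idx = 0 ∧ IsSuccLimit q.ord := by
  refine ⟨fun hq => ?_, fun ⟨h0, hlim⟩ => ofOrd_ord h0 ▸ isSuccLimit_ofOrd _ hlim⟩
  have h0 := idx_eq_zero_of_isSuccPrelimit hq.isSuccPrelimit
  refine ⟨h0, ?_⟩
  obtain ⟨α, hα, rfl⟩ : ∃ α hα, q = ofOrd X α hα := ⟨_, _, (ofOrd_ord h0).symm⟩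
  rcases Ordinal.zero_or_succ_or_isSuccLimit α with rfl | ⟨δ, rfl⟩ | h
  · exact absurd (isMin_ofOrd_zero _) hq.not_isMin
  · exact absurd hq.isSuccPrelimit (not_isSuccPrelimit_ofOrd_succ δ hα)
  · exact h

lemma isPredPrelimit_ofOrd_iff {α : Ordinal} (h : α < omega1') :
    IsPredPrelimit (ofOrd X α h) ↔ α ∈ X := by
  constructor
  · intro hα
    by_contra hαX
    have hs : succ α < omega1' := omega1'_isSuccLimit.succ_lt h
    refine hα (ofOrd X (succ α) hs) ⟨lt_of_ord_lt_ord (lt_succ α), fun t hαt hts => ?_⟩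
    have ht : t.ord ≤ α := lt_succ_iff.1 (lt_ofOrd_iff.1 hts)
    rcases ofOrd_lt_iff.1 hαt with hlt | ⟨heq, hpos⟩
    · exact ht.not_gt hlt
    · exact hpos.ne' (idx_eq_zero_of_ord_notMem (heq ▸ hαX))
  · intro hαX b hb
    let t : LX X := ⟨(⟨α, h⟩, b.idx + 1), fun h' => (h' hαX).elim⟩
    have ht : t.idx = b.idx + 1 := rfl
    refine hb.2 (ofOrd_lt_iff.2 (Or.inr ⟨rfl, by omega⟩) : ofOrd X α h < t) ?_
    rcases ofOrd_lt_iff.1 hb.1 with hlt | ⟨heq, hpos⟩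
    · exact lt_of_ord_lt_ord hlt
    · exact (lt_iff_of_ord_eq (p := t) (q := b) heq).2 (Or.inr ⟨by omega, hpos⟩)

variable {Y : Set Ordinal}

noncomputable def orderIsoOfRelIso (f : LXlt X ≃r LXlt Y) : LX X ≃o LX Y :=
  OrderIso.ofRelIsoLT
    { toEquiv := f.toEquiv
      map_rel_iff' := fun {_ _} => by rw [lt_iff_LXlt, lt_iff_LXlt]; exact f.map_rel_iff }

lemma le_ord_apply_ofOrd (e : LX X ≃o LX Y) {α : Ordinal} (h : α < omega1')
    (hα : IsSuccLimit α) : α ≤ (e (ofOrd X α h)).ord := by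
  induction α using WellFoundedLT.induction with
  | _ α IH =>
    by_contra! hlt
    obtain ⟨h0, hγ⟩ := isSuccLimit_iff.1 (e.isSuccLimit_apply_iff.2 (isSuccLimit_ofOrd h hα))
    set γ := (e (ofOrd X α h)).ord
    have hmap : e (ofOrd X γ (hlt.trans h)) < ofOrd Y γ (hlt.trans h) := by
      rw [ofOrd_ord h0]
      exact e.lt_iff_lt.2 (lt_ofOrd_iff.2 hlt)
    exact (IH γ hlt _ hγ).not_gt (lt_ofOrd_iff.1 hmap)

lemma apply_ofOrd (e : LX X ≃o LX Y) {α : Ordinal} (h : α < omega1') (hα : IsSuccLimit α) :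
    e (ofOrd X α h) = ofOrd Y α h := by
  set q := e (ofOrd X α h)
  obtain ⟨h0, hlim⟩ := isSuccLimit_iff.1 (e.isSuccLimit_apply_iff.2 (isSuccLimit_ofOrd h hα))
  have hle : q.ord ≤ α :=
    calc q.ord ≤ (e.symm (ofOrd Y q.ord q.ord_lt_omega1')).ord :=
          le_ord_apply_ofOrd e.symm _ hlim
      _ = α := by rw [ofOrd_ord h0, e.symm_apply_apply]; rfl
  exact ext (le_antisymm hle (le_ord_apply_ofOrd e h hα)) h0

lemma mem_iff_mem_of_orderIso (e : LX X ≃o LX Y) {α : Ordinal} (h : α < omega1')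
    (hα : IsSuccLimit α) :
    α ∈ X ↔ α ∈ Y := by
  rw [← isPredPrelimit_ofOrd_iff h, ← isPredPrelimit_ofOrd_iff (X := Y) h, ← apply_ofOrd e h hα,
    e.isPredPrelimit_apply_iff]

end LX

theorem stmt7_general (X Y : Set Ordinal)
    (f : LXlt X ≃r LXlt Y)
    (α : Ordinal) (hlt : α < omega1') (hlim : Order.IsSuccLimit α) :
    (f ⟨(⟨α, hlt⟩, 0), fun _ => rfl⟩).1 = (⟨α, hlt⟩, 0) ∧ (α ∈ X ↔ α ∈ Y) :=
  ⟨congrArg Subtype.val (LX.apply_ofOrd (LX.orderIsoOfRelIso f) hlt hlim),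
    LX.mem_iff_mem_of_orderIso (LX.orderIsoOfRelIso f) hlt hlim⟩

/-- Any order isomorphism `f : L_X → L_Y` fixes all points `(α,0)` with `α` a
limit ordinal; moreover `α ∈ X ↔ α ∈ Y` for all such `α`. -/
theorem stmt7 (X Y : Set Ordinal)
    (hX : ∀ o ∈ X, o < omega1' ∧ Order.IsSuccLimit o)
    (hY : ∀ o ∈ Y, o < omega1' ∧ Order.IsSuccLimit o)
    (f : LXlt X ≃r LXlt Y)
    (α : Ordinal) (hlt : α < omega1') (hlim : Order.IsSuccLimit α) :
    (f ⟨(⟨α, hlt⟩, 0), fun _ => rfl⟩).1 = (⟨α, hlt⟩, 0) ∧ (α ∈ X ↔ α ∈ Y) :=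
  stmt7_general X Y f α hlt hlim
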